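/- The operator T_θ on H ⊕ ℂ is an involution (T_θ ∘ T_θ = identity) if and only if exp(iθ) ∈ {1, −1}, U ξ = −ξ, and U ∘ U = identity (equivalently U is a unitary involution). -/
import Mathlib


open scoped InnerProductSpace

noncomputable section

variable {H : Type*} [NormedAddCommGroup H] [InnerProductSpace ℂ H]

/-- The vector `(x, z)` of the Hilbert space direct sum `H ⊕ ℂ`. -/
def mkE (x : H) (z : ℂ) : WithLp 2 (H × ℂ) := (WithLp.equiv 2 (H × ℂ)).symm (x, z)

/-- With `ξ ≠ 0`, `a = √(1 + ‖ξ‖²)`, `A x = x + ((a−1)/‖ξ‖²)·⟨x,ξ⟩·ξ`, `U` unitary, `θ ∈ ℝ`,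
and `T_θ(x,z) = e^{iθ}·(U(A x) + z·U ξ, ⟨x,ξ⟩ + a·z)`: the operator `T_θ` is an involution (`T_θ ∘ T_θ = 1`) iff
`e^{iθ} ∈ {1, −1}`, `U ξ = −ξ` and `U ∘ U = 1` (so `U` is a unitary involution).
(The paper's inner product `⟨x,y⟩` is linear in the first slot, i.e. `⟪y,x⟫_ℂ` in Mathlib's
convention.) -/
theorem stmt15 [CompleteSpace H]
    (ξ : H) (hξ : ξ ≠ 0) (a : ℝ) (ha : a = Real.sqrt (1 + ‖ξ‖ ^ 2))
    (A : H →L[ℂ] H)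
    (hA : ∀ x : H, A x = x + ((((a - 1) / ‖ξ‖ ^ 2 : ℝ) : ℂ) * ⟪ξ, x⟫_ℂ) • ξ)
    (U : H →L[ℂ] H) (hU : U ∈ unitary (H →L[ℂ] H)) (θ : ℝ)
    (T : WithLp 2 (H × ℂ) →L[ℂ] WithLp 2 (H × ℂ))
    (hT : ∀ (x : H) (z : ℂ),
      T (mkE x z) =
        Complex.exp (θ * Complex.I) • mkE (U (A x) + z • U ξ) (⟪ξ, x⟫_ℂ + (a : ℂ) * z)) :
    T ∘L T = 1 ↔
      (Complex.exp (θ * Complex.I) = 1 ∨ Complex.exp (θ * Complex.I) = -1) ∧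
        U ξ = -ξ ∧ U ∘L U = 1 := by
  set e := Complex.exp (θ * Complex.I) with he_def
  have he : e ≠ 0 := Complex.exp_ne_zero _
  have hn0 : ‖ξ‖ ≠ 0 := norm_ne_zero_iff.mpr hξ
  set n : ℂ := ((‖ξ‖ ^ 2 : ℝ) : ℂ) with hn_def
  have hnC : n ≠ 0 := by
    simp only [hn_def, ne_eq, Complex.ofReal_eq_zero]
    exact pow_ne_zero _ hn0
  set c : ℂ := (((a - 1) / ‖ξ‖ ^ 2 : ℝ) : ℂ) with hc_def
  have hiξ : ⟪ξ, ξ⟫_ℂ = n := by simp [hn_def, inner_self_eq_norm_sq_to_K]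
  have ha2 : (a : ℂ) ^ 2 = 1 + n := by
    have h : a ^ 2 = 1 + ‖ξ‖ ^ 2 := by rw [ha]; exact Real.sq_sqrt (by positivity)
    rw [hn_def]; exact_mod_cast h
  have ha0 : (a : ℂ) ≠ 0 := by
    have h : (0:ℝ) < a := by rw [ha]; positivity
    exact_mod_cast h.ne'
  have hcn : c * n = (a : ℂ) - 1 := by
    rw [hc_def, hn_def]
    push_cast
    rw [div_mul_eq_mul_div, mul_div_assoc, div_self (by exact_mod_cast pow_ne_zero _ hn0),
      mul_one]
  have hca : c * ((a : ℂ) + 1) = 1 := by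
    apply mul_right_cancel₀ hnC
    linear_combination ((a:ℂ) + 1) * hcn + ha2
  have hsmul : ∀ (t : ℂ) (u : H) (v : ℂ), t • mkE u v = mkE (t • u) (t * v) := fun _ _ _ => rfl
  have hmk : ∀ (u u' : H) (v v' : ℂ), mkE u v = mkE u' v' ↔ u = u' ∧ v = v' := by
    intro u u' v v'
    simp [mkE, Prod.ext_iff]
  have hinner : ∀ x y : H, ⟪U x, U y⟫_ℂ = ⟪x, y⟫_ℂ := by
    intro x y
    have h1 : ContinuousLinearMap.adjoint U (U x) = x := by
      have h := hU.1
      rw [ContinuousLinearMap.star_eq_adjoint] at h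
      calc ContinuousLinearMap.adjoint U (U x) = (ContinuousLinearMap.adjoint U * U) x := rfl
        _ = x := by rw [h]; rfl
    rw [← ContinuousLinearMap.adjoint_inner_left, h1]
  have hAξ : A ξ = (a : ℂ) • ξ := by
    rw [hA, hiξ, hcn]
    module
  -- main computation assuming U ξ = -ξ
  have main : U ξ = -ξ → ∀ (x : H) (z : ℂ),
      T (T (mkE x z)) = (e * e) • mkE (U (U x)) z := by
    intro hUξ x z
    have hiUx : ∀ y : H, ⟪ξ, U y⟫_ℂ = -⟪ξ, y⟫_ℂ := by
      intro y
      have h := hinner ξ y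
      rw [hUξ, inner_neg_left] at h
      linear_combination -h
    rw [hT, map_smul, hT, hsmul, hsmul, hsmul, hmk]
    constructor
    · simp only [hA, map_add, map_smul, map_neg, hUξ, inner_add_right, inner_smul_right,
        inner_neg_right, hiUx, hiξ, smul_neg, neg_neg]
      match_scalars
      · ring
      · linear_combination e*e*⟪ξ, x⟫_ℂ*c*hcn + e*e*z*hcn + e*e*⟪ξ, x⟫_ℂ*hca
    · simp only [hA, map_add, map_smul, map_neg, hUξ, inner_add_right, inner_smul_right,
        inner_neg_right, hiUx, hiξ, smul_neg, neg_neg]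
      linear_combination (-(e*e*⟪ξ, x⟫_ℂ)) * hcn + (e*e*z) * ha2
  constructor
  · intro h
    have hTT : ∀ (x : H) (z : ℂ), T (T (mkE x z)) = mkE x z := by
      intro x z
      have h2 := DFunLike.congr_fun h (mkE x z)
      simpa using h2
    -- step 1 : ⟪ξ, U ξ⟫ = -n
    have hs : ⟪ξ, U ξ⟫_ℂ = -n := by
      have h1 := hTT ξ 0
      rw [hT, map_smul, hT, hsmul, hsmul, hmk] at h1
      obtain ⟨-, h2⟩ := h1
      simp only [hAξ, map_smul, zero_smul, add_zero, mul_zero, hiξ, inner_add_right,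
        inner_smul_right, smul_zero] at h2
      -- h2 : e * (e * ((a:ℂ) * ⟪ξ, U ξ⟫ + a * n)) = 0
      have h3 : (⟪ξ, U ξ⟫_ℂ + n) = 0 := by
        have hene : e * e * (a:ℂ) ≠ 0 := mul_ne_zero (mul_ne_zero he he) ha0
        apply mul_left_cancel₀ hene
        rw [mul_zero]
        linear_combination h2
      linear_combination h3
    -- step 2 : U ξ = -ξ
    have hUξ : U ξ = -ξ := by
      have h4 := hinner ξ ξ
      rw [inner_self_eq_norm_sq_to_K, inner_self_eq_norm_sq_to_K] at h4
      have h5 : (‖U ξ‖:ℝ)^2 = (‖ξ‖:ℝ)^2 := by exact_mod_cast h4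
      have hre : (RCLike.re (⟪U ξ, ξ⟫_ℂ) : ℝ) = -‖ξ‖^2 := by
        have h6 : ⟪U ξ, ξ⟫_ℂ = -n := by
          rw [← inner_conj_symm, hs]
          simp [hn_def]
        rw [h6, hn_def]
        simp [← Complex.ofReal_pow]
      have hzero : ‖U ξ + ξ‖ ^ 2 = 0 := by
        rw [@norm_add_sq ℂ, h5, hre]
        ring
      have h7 : U ξ + ξ = 0 := by
        rw [← norm_eq_zero]
        exact pow_eq_zero_iff two_ne_zero |>.mp hzero
      exact eq_neg_of_add_eq_zero_left h7
    -- step 3 : e * e = 1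
    have hee : e * e = 1 := by
      have h1 := hTT 0 1
      rw [hT, map_smul, hT, hsmul, hsmul, hmk] at h1
      obtain ⟨-, h2⟩ := h1
      simp only [map_zero, zero_add, one_smul, inner_zero_right, mul_one, hs, map_neg,
        inner_neg_right, hUξ, zero_smul, add_zero, smul_zero, mul_zero, hiξ] at h2
      linear_combination h2 - (e*e) * ha2
    refine ⟨mul_self_eq_one_iff.mp hee, hUξ, ?_⟩
    ext x
    have h1 := hTT x 0
    rw [main hUξ x 0, hee, one_smul, hmk] at h1
    simpa using h1.1
  · rintro ⟨he1, hUξ, hUU⟩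
    have hee : e * e = 1 := by rcases he1 with h | h <;> rw [h] <;> ring
    ext v
    have hU2 : ∀ x : H, U (U x) = x := by
      intro x
      have := DFunLike.congr_fun hUU x
      simpa using this
    have hv : mkE ((WithLp.equiv 2 (H × ℂ)) v).1 ((WithLp.equiv 2 (H × ℂ)) v).2 = v := rfl
    have h := main hUξ ((WithLp.equiv 2 (H × ℂ)) v).1 ((WithLp.equiv 2 (H × ℂ)) v).2
    rw [hv, hU2, hee, one_smul, hv] at h
    simpa using h

end
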